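/- arXiv:1405.5379 — 2 statements merged into one kernel-verified Lean document; each statement's English description precedes it below -/
import Mathlib

section
/- Let N ≥ 2 and let a₁, …, a_{N−1} be integers forming a palindromic tuple, a_j = a_{N−j} for 1 ≤ j ≤ N−1. Let x : ℕ → ℝ and 𝒵 : ℕ → ℝ be sequences with x_n > 0 and 𝒵_n > 0 for all n, satisfying the modified T-system x_{n+N} · x_n = 𝒵_n · ( ∏_{j=1}^{N−1} x_{n+j}^{[a_j]₊} + ∏_{j=1}^{N−1} x_{n+j}^{[−a_j]₊} ) for all n ∈ ℕ, where [b]₊ := max(b,0). Define ȳ_n := ∏_{j=1}^{N−1} x_{n+j}^{−a_j}. Then ȳ satisfies the Y-system ȳ_{n+N} · ȳ_n = ∏_{j=1}^{N−1} (1 + ȳ_{n+j})^{[−a_j]₊} / ∏_{j=1}^{N−1} (1 + ȳ_{n+j}^{−1})^{[a_j]₊} for all n ∈ ℕ if and only if 𝒵 satisfies the Z-system ∏_{j=1}^{N−1} 𝒵_{n+j}^{−a_j} = 1 for all n ∈ ℕ. -/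
/-!
Write `P_n = ∏_j x_{n+j}^{[a_j]₊}` and `Q_n = ∏_j x_{n+j}^{[-a_j]₊}`, so that `ȳ_n = Q_n / P_n`,
`1 + ȳ_n = (P_n + Q_n) / P_n` and `1 + ȳ_n⁻¹ = (P_n + Q_n) / Q_n`. The operators
`x ↦ (n ↦ ∏_j x_{n+j}^{e_j})` commute for different exponent tuples `e`, which gives
`∏_j P_{n+j}^{[-a_j]₊} = ∏_j Q_{n+j}^{[a_j]₊}`; hence the right-hand side of the Y-system is
`∏_j (P_{n+j} + Q_{n+j})^{-a_j}`. By the T-system the left-hand side is the same product times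
`∏_j 𝒵_{n+j}^{-a_j}`, so the Y-system holds exactly when the Z-system does.
-/

open Finset

variable {G : Type*} (I : Finset ℕ)

def shiftMonomial [DivisionCommMonoid G] (e : ℕ → ℤ) (x : ℕ → G) (n : ℕ) : G :=
  ∏ j ∈ I, x (n + j) ^ e j

section DivisionCommMonoid

variable [DivisionCommMonoid G]

theorem shiftMonomial_add_right (e : ℕ → ℤ) (x : ℕ → G) (n m : ℕ) :
    shiftMonomial I e x (n + m) = shiftMonomial I e (fun k => x (k + m)) n :=
  prod_congr rfl fun j _ => by rw [Nat.add_right_comm]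

theorem shiftMonomial_mul (e : ℕ → ℤ) (x z : ℕ → G) :
    shiftMonomial I e (x * z) = shiftMonomial I e x * shiftMonomial I e z := by
  funext n
  simp only [shiftMonomial, Pi.mul_apply, mul_zpow, prod_mul_distrib]

theorem shiftMonomial_div (e : ℕ → ℤ) (x z : ℕ → G) :
    shiftMonomial I e (x / z) = shiftMonomial I e x / shiftMonomial I e z := by
  funext n
  simp only [shiftMonomial, Pi.div_apply, div_zpow, prod_div_distrib]

theorem shiftMonomial_comm (e f : ℕ → ℤ) (x : ℕ → G) :
    shiftMonomial I f (shiftMonomial I e x) = shiftMonomial I e (shiftMonomial I f x) := by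
  funext n
  simp only [shiftMonomial, ← prod_zpow, ← zpow_mul]
  rw [prod_comm]
  refine prod_congr rfl fun j _ => prod_congr rfl fun k _ => ?_
  rw [Nat.add_right_comm, mul_comm]

end DivisionCommMonoid

theorem shiftMonomial_div_shiftMonomial [CommGroupWithZero G] (e f : ℕ → ℤ) {x : ℕ → G}
    (hx : ∀ n, x n ≠ 0) :
    shiftMonomial I e x / shiftMonomial I f x = shiftMonomial I (e - f) x := by
  funext n
  simp only [shiftMonomial, Pi.div_apply, ← prod_div_distrib, Pi.sub_apply, zpow_sub₀ (hx _)]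

theorem shiftMonomial_neg_eq_div [CommGroupWithZero G] (a : ℕ → ℤ) {x : ℕ → G}
    (hx : ∀ n, x n ≠ 0) :
    shiftMonomial I (-a) x = shiftMonomial I a⁻ x / shiftMonomial I a⁺ x := by
  rw [← negPart_sub_posPart, shiftMonomial_div_shiftMonomial I _ _ hx]

section LinearOrderedField

variable {K : Type*} [Field K] [LinearOrder K] [IsStrictOrderedRing K]

theorem shiftMonomial_pos (e : ℕ → ℤ) {x : ℕ → K} (hx : ∀ n, 0 < x n) (n : ℕ) :
    0 < shiftMonomial I e x n :=
  prod_pos fun _ _ => zpow_pos (hx _) _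

variable (a : ℕ → ℤ) {x : ℕ → K}

theorem one_add_shiftMonomial_neg (hx : ∀ n, 0 < x n) :
    1 + shiftMonomial I (-a) x =
      (shiftMonomial I a⁺ x + shiftMonomial I a⁻ x) / shiftMonomial I a⁺ x := by
  funext n
  have hP := (shiftMonomial_pos I a⁺ hx n).ne'
  simp only [shiftMonomial_neg_eq_div I a fun n => (hx n).ne', Pi.add_apply, Pi.div_apply,
    Pi.one_apply]
  field_simp

theorem one_add_inv_shiftMonomial_neg (hx : ∀ n, 0 < x n) :
    1 + (shiftMonomial I (-a) x)⁻¹ =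
      (shiftMonomial I a⁺ x + shiftMonomial I a⁻ x) / shiftMonomial I a⁻ x := by
  funext n
  have hQ := (shiftMonomial_pos I a⁻ hx n).ne'
  simp only [shiftMonomial_neg_eq_div I a fun n => (hx n).ne', Pi.add_apply, Pi.div_apply,
    Pi.one_apply, inv_div]
  field_simp
  ring

theorem ysystem_rhs_eq (hx : ∀ n, 0 < x n) (n : ℕ) :
    shiftMonomial I a⁻ (1 + shiftMonomial I (-a) x) n /
        shiftMonomial I a⁺ (1 + (shiftMonomial I (-a) x)⁻¹) n =
      shiftMonomial I (-a) (shiftMonomial I a⁺ x + shiftMonomial I a⁻ x) n := by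
  set P := shiftMonomial I a⁺ x
  set Q := shiftMonomial I a⁻ x
  have hQ : ∀ n, 0 < Q n := shiftMonomial_pos I a⁻ hx
  have hPQ : ∀ n, (P + Q) n ≠ 0 := fun n => (add_pos (shiftMonomial_pos I a⁺ hx n) (hQ n)).ne'
  have hPQ_sym : shiftMonomial I a⁻ P = shiftMonomial I a⁺ Q := shiftMonomial_comm I a⁺ a⁻ x
  rw [one_add_shiftMonomial_neg I a hx, one_add_inv_shiftMonomial_neg I a hx, shiftMonomial_div,
    shiftMonomial_div, hPQ_sym, Pi.div_apply, Pi.div_apply,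
    div_div_div_cancel_right₀ (shiftMonomial_pos I a⁺ hQ n).ne', ← Pi.div_apply,
    shiftMonomial_div_shiftMonomial I _ _ hPQ, negPart_sub_posPart]

theorem ysystem_iff_zsystem_of_tsystem (hx : ∀ n, 0 < x n) (N : ℕ) (𝒵 : ℕ → K)
    (hT : ∀ n, x (n + N) * x n = 𝒵 n * (shiftMonomial I a⁺ x n + shiftMonomial I a⁻ x n)) :
    (∀ n, shiftMonomial I (-a) x (n + N) * shiftMonomial I (-a) x n =
      shiftMonomial I a⁻ (1 + shiftMonomial I (-a) x) n /
        shiftMonomial I a⁺ (1 + (shiftMonomial I (-a) x)⁻¹) n) ↔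
    ∀ n, shiftMonomial I (-a) 𝒵 n = 1 := by
  set S := shiftMonomial I a⁺ x + shiftMonomial I a⁻ x
  have hS : ∀ n, 0 < S n := fun n =>
    add_pos (shiftMonomial_pos I a⁺ hx n) (shiftMonomial_pos I a⁻ hx n)
  have hLHS : ∀ n, shiftMonomial I (-a) x (n + N) * shiftMonomial I (-a) x n =
      shiftMonomial I (-a) 𝒵 n * shiftMonomial I (-a) S n := by
    intro n
    have hT' : (fun k => x (k + N)) * x = 𝒵 * S := funext hT
    rw [shiftMonomial_add_right, ← Pi.mul_apply, ← shiftMonomial_mul, hT', shiftMonomial_mul,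
      Pi.mul_apply]
  refine forall_congr' fun n => ?_
  rw [hLHS, ysystem_rhs_eq I a hx]
  exact mul_eq_right₀ (shiftMonomial_pos I (-a) hS n).ne'

end LinearOrderedField

theorem Tzsystem_solves_Ysystem_iff_Zsystem_general
    (N : ℕ) (a : ℕ → ℤ)
    (x 𝒵 : ℕ → ℝ) (hx : ∀ n, 0 < x n)
    (hT : ∀ n : ℕ, x (n + N) * x n = 𝒵 n *
      ((∏ j ∈ Finset.Icc 1 (N - 1), x (n + j) ^ (max (a j) 0)) +
       (∏ j ∈ Finset.Icc 1 (N - 1), x (n + j) ^ (max (-(a j)) 0))))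
    (y : ℕ → ℝ)
    (hy : ∀ n, y n = ∏ j ∈ Finset.Icc 1 (N - 1), x (n + j) ^ (-(a j))) :
    (∀ n : ℕ, y (n + N) * y n =
      (∏ j ∈ Finset.Icc 1 (N - 1), (1 + y (n + j)) ^ (max (-(a j)) 0)) /
      (∏ j ∈ Finset.Icc 1 (N - 1), (1 + (y (n + j))⁻¹) ^ (max (a j) 0))) ↔
    (∀ n : ℕ, (∏ j ∈ Finset.Icc 1 (N - 1), 𝒵 (n + j) ^ (-(a j))) = 1) := by
  obtain rfl : y = shiftMonomial (Icc 1 (N - 1)) (-a) x := funext hy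
  exact ysystem_iff_zsystem_of_tsystem _ a hx N 𝒵 hT

/-- For a period-1 quiver with palindromic exponent tuple `(a_1, …, a_{N-1})` and positive
sequences `x`, `𝒵` satisfying the modified T-system, `ȳ_n = ∏_j x_{n+j}^{-a_j}` solves the
Y-system if and only if `𝒵` solves the Z-system `∏_j 𝒵_{n+j}^{-a_j} = 1`.
Here `[b]₊ = max b 0` and all powers are `zpow`. -/
theorem Tzsystem_solves_Ysystem_iff_Zsystem
    (N : ℕ) (hN : 2 ≤ N) (a : ℕ → ℤ)
    (hpal : ∀ j, 1 ≤ j → j ≤ N - 1 → a j = a (N - j))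
    (x 𝒵 : ℕ → ℝ) (hx : ∀ n, 0 < x n) (h𝒵 : ∀ n, 0 < 𝒵 n)
    (hT : ∀ n : ℕ, x (n + N) * x n = 𝒵 n *
      ((∏ j ∈ Finset.Icc 1 (N - 1), x (n + j) ^ (max (a j) 0)) +
       (∏ j ∈ Finset.Icc 1 (N - 1), x (n + j) ^ (max (-(a j)) 0))))
    (y : ℕ → ℝ)
    (hy : ∀ n, y n = ∏ j ∈ Finset.Icc 1 (N - 1), x (n + j) ^ (-(a j))) :
    (∀ n : ℕ, y (n + N) * y n =
      (∏ j ∈ Finset.Icc 1 (N - 1), (1 + y (n + j)) ^ (max (-(a j)) 0)) /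
      (∏ j ∈ Finset.Icc 1 (N - 1), (1 + (y (n + j))⁻¹) ^ (max (a j) 0))) ↔
    (∀ n : ℕ, (∏ j ∈ Finset.Icc 1 (N - 1), 𝒵 (n + j) ^ (-(a j))) = 1) :=
  Tzsystem_solves_Ysystem_iff_Zsystem_general N a x 𝒵 hx hT y hy
end

section
/- Let x : ℕ → ℝ and 𝒵 : ℕ → ℝ be sequences with x_n > 0 and 𝒵_n > 0 for all n, satisfying the sixth-order T_z-system x_{n+6} · x_n = 𝒵_n · ( x_{n+5}² · x_{n+3}⁴ · x_{n+1}² + (x_{n+4} · x_{n+2})⁶ ) for all n ∈ ℕ. Then the quantities U_n := x_n · x_{n+2}² · x_{n+4} / (x_{n+1}³ · x_{n+3}³) satisfy the U_z-system U_{n+2} · U_n = 𝒵_n · ( U_{n+1}^{−1} + U_{n+1}^{−3} ) for all n ∈ ℕ. -/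
/-!
Put `w = x_{n+2} x_{n+4}` and `d = x_{n+1} x_{n+3}² x_{n+5}`. Then `U_{n+1} = d / w³` and
`U_{n+2} U_n = x_{n+6} x_n w³ / d³`, while the bracket of the T_z-system is `d² + w⁶`; so the
T_z-relation multiplied by `w³ / d³` is exactly the U_z-relation.
-/

section

variable {K : Type*} [Field K]

def symplecticCoord (x : ℕ → K) (n : ℕ) : K :=
  x n * (x (n + 2)) ^ 2 * x (n + 4) / ((x (n + 1)) ^ 3 * (x (n + 3)) ^ 3)

theorem symplecticCoord_succ_inv (x : ℕ → K) (n : ℕ) :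
    (symplecticCoord x (n + 1))⁻¹ =
      (x (n + 2) * x (n + 4)) ^ 3 / (x (n + 1) * x (n + 3) ^ 2 * x (n + 5)) := by
  simp only [symplecticCoord, inv_div]
  ring

theorem symplecticCoord_add_two_mul (x : ℕ → K) (n : ℕ) :
    symplecticCoord x (n + 2) * symplecticCoord x n =
      x (n + 6) * x n * (x (n + 2) * x (n + 4)) ^ 3 /
        (x (n + 1) * x (n + 3) ^ 2 * x (n + 5)) ^ 3 := by
  simp only [symplecticCoord, div_mul_div_comm]
  ring

theorem symplecticCoord_add_two_mul_eq_of_Tz (x : ℕ → K) (z : K) (n : ℕ)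
    (hd : x (n + 1) * x (n + 3) ^ 2 * x (n + 5) ≠ 0)
    (hT : x (n + 6) * x n =
      z * ((x (n + 5)) ^ 2 * (x (n + 3)) ^ 4 * (x (n + 1)) ^ 2 + (x (n + 4) * x (n + 2)) ^ 6)) :
    symplecticCoord x (n + 2) * symplecticCoord x n =
      z * ((symplecticCoord x (n + 1))⁻¹ + ((symplecticCoord x (n + 1))⁻¹) ^ 3) := by
  rw [symplecticCoord_add_two_mul, symplecticCoord_succ_inv, hT]
  rw [div_pow, div_add_div _ _ hd (pow_ne_zero 3 hd), mul_div_assoc',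
    div_eq_div_iff (pow_ne_zero 3 hd) (mul_ne_zero hd (pow_ne_zero 3 hd))]
  ring

end

theorem sixthOrder_Tz_to_Uz_general
    (x 𝒵 : ℕ → ℝ) (hx : ∀ n, 0 < x n)
    (hT : ∀ n : ℕ, x (n + 6) * x n = 𝒵 n *
      ((x (n + 5)) ^ 2 * (x (n + 3)) ^ 4 * (x (n + 1)) ^ 2 + (x (n + 4) * x (n + 2)) ^ 6))
    (U : ℕ → ℝ)
    (hU : ∀ n, U n = x n * (x (n + 2)) ^ 2 * x (n + 4) / ((x (n + 1)) ^ 3 * (x (n + 3)) ^ 3)) :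
    ∀ n : ℕ, U (n + 2) * U n = 𝒵 n * ((U (n + 1))⁻¹ + ((U (n + 1))⁻¹) ^ 3) := by
  obtain rfl : U = symplecticCoord x := funext hU
  intro n
  have hd : x (n + 1) * x (n + 3) ^ 2 * x (n + 5) ≠ 0 :=
    (mul_pos (mul_pos (hx _) (pow_pos (hx _) 2)) (hx _)).ne'
  exact symplecticCoord_add_two_mul_eq_of_Tz x (𝒵 n) n hd (hT n)

/-- For positive solutions of the sixth-order (nonintegrable) T_z-system
`x_{n+6} x_n = 𝒵_n (x_{n+5}² x_{n+3}⁴ x_{n+1}² + (x_{n+4} x_{n+2})⁶)`, the quantities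
`U_n = x_n x_{n+2}² x_{n+4}/(x_{n+1}³ x_{n+3}³)` satisfy the U_z-system
`U_{n+2} U_n = 𝒵_n (U_{n+1}⁻¹ + U_{n+1}⁻³)`. -/
theorem sixthOrder_Tz_to_Uz
    (x 𝒵 : ℕ → ℝ) (hx : ∀ n, 0 < x n) (h𝒵 : ∀ n, 0 < 𝒵 n)
    (hT : ∀ n : ℕ, x (n + 6) * x n = 𝒵 n *
      ((x (n + 5)) ^ 2 * (x (n + 3)) ^ 4 * (x (n + 1)) ^ 2 + (x (n + 4) * x (n + 2)) ^ 6))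
    (U : ℕ → ℝ)
    (hU : ∀ n, U n = x n * (x (n + 2)) ^ 2 * x (n + 4) / ((x (n + 1)) ^ 3 * (x (n + 3)) ^ 3)) :
    ∀ n : ℕ, U (n + 2) * U n = 𝒵 n * ((U (n + 1))⁻¹ + ((U (n + 1))⁻¹) ^ 3) :=
  sixthOrder_Tz_to_Uz_general x 𝒵 hx hT U hU
end
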